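/- Conflict analysis following the First-UIP scheme, started from a nogood violated at decision level d > 0 in which some literal has decision level d, terminates with a nogood δ containing exactly one literal of decision level d, provided every implied literal has an antecedent all of whose other literals occur earlier in the assignment. -/

import Mathlib

inductive Lit (V : Type) where
  | pos : V → Lit V
  | neg : V → Lit V
deriving DecidableEq

def Lit.compl {V : Type} : Lit V → Lit V
  | .pos v => .neg v
  | .neg v => .pos v

def Lit.var {V : Type} : Lit V → V
  | .pos v => v
  | .neg v => v

variable {V : Type} [DecidableEq V]

/-- `σ` is the literal of `δ` occurring last in the assignment `A`. -/
def IsLast (A : List (Lit V)) (δ : Finset (Lit V)) (σ : Lit V) : Prop :=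
  σ ∈ δ ∧ σ ∈ A ∧ ∀ τ ∈ δ, A.idxOf τ ≤ A.idxOf σ

/-- `ε` is an antecedent of `σ`: `σ̄ ∈ ε` and every other literal of `ε`
occurs in `A` strictly before `σ`. -/
def Antecedent (A : List (Lit V)) (σ : Lit V) (ε : Finset (Lit V)) : Prop :=
  σ.compl ∈ ε ∧ ∀ τ ∈ ε, τ ≠ σ.compl → τ ∈ A ∧ A.idxOf τ < A.idxOf σ

/-- `σ` is an implied (non-decision) literal of `A`: either its decision level
is `0`, or it is not the first literal of its decision level in `A`. -/
def Implied (A : List (Lit V)) (dl : Lit V → ℕ) (σ : Lit V) : Prop :=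
  dl σ = 0 ∨ ∃ τ ∈ A, dl τ = dl σ ∧ A.idxOf τ < A.idxOf σ

/-- One conflict resolution step of the First-UIP scheme: the last literal `σ`
of the current (violated) nogood `δ` is not the unique literal of `δ` at its
decision level, and `δ` is replaced by its resolvent with an antecedent of
`σ`. -/
def Step (A : List (Lit V)) (dl : Lit V → ℕ) (Ante : Lit V → Finset (Lit V) → Prop)
    (δ δ' : Finset (Lit V)) : Prop :=
  ∃ σ ε, IsLast A δ σ ∧ (∀ τ ∈ δ, τ ∈ A) ∧
    (∃ τ ∈ δ, τ ≠ σ ∧ dl τ = dl σ) ∧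
    Ante σ ε ∧ Antecedent A σ ε ∧
    δ' = δ.erase σ ∪ ε.erase σ.compl

/-!
Resolve the last literal `σ` of the current nogood as long as the nogood has at least two
literals of level `d`. Since levels are monotone along the assignment and bounded by `d`,
`σ` has level `d`; it is not the first literal of that level, hence implied, so it has an
antecedent. Resolution replaces `σ` by literals that occur strictly before it, so the weight
`∑ 2 ^ (position)` strictly decreases, and some other literal of level `d` survives. Hence the
process stops, and it can only stop at a nogood with exactly one literal of level `d`.
-/

theorem List.Pairwise.rel_of_idxOf_le {α : Type*} [DecidableEq α] {R : α → α → Prop}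
    [Std.Refl R] {l : List α} (hl : l.Pairwise R) {a b : α} (ha : a ∈ l) (hb : b ∈ l)
    (hab : l.idxOf a ≤ l.idxOf b) : R a b := by
  rcases hab.lt_or_eq with hlt | heq
  · simpa using List.pairwise_iff_get.mp hl
      ⟨_, List.idxOf_lt_length_iff.2 ha⟩ ⟨_, List.idxOf_lt_length_iff.2 hb⟩ hlt
  · rw [(List.idxOf_inj ha).mp heq]
    exact Std.Refl.refl b

section

variable {A : List (Lit V)}

theorem exists_isLast {δ : Finset (Lit V)} (hδ : δ.Nonempty) (hδA : ∀ τ ∈ δ, τ ∈ A) :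
    ∃ σ, IsLast A δ σ := by
  obtain ⟨σ, hσ, hmax⟩ := Finset.exists_max_image δ A.idxOf hδ
  exact ⟨σ, hσ, hδA σ hσ, hmax⟩

theorem IsLast.idxOf_lt {δ : Finset (Lit V)} {σ τ : Lit V} (hσ : IsLast A δ σ)
    (hτ : τ ∈ δ) (hτA : τ ∈ A) (hne : τ ≠ σ) : A.idxOf τ < A.idxOf σ :=
  (hσ.2.2 τ hτ).lt_of_ne fun h => hne ((List.idxOf_inj hτA).mp h)

theorem IsLast.dl_eq {dl : Lit V → ℕ} {d : ℕ} {δ : Finset (Lit V)} {σ τ : Lit V}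
    (hmono : A.Pairwise (fun a b => dl a ≤ dl b)) (hmax : ∀ l ∈ A, dl l ≤ d)
    (hσ : IsLast A δ σ) (hδA : ∀ τ ∈ δ, τ ∈ A) (hτ : τ ∈ δ) (hτd : dl τ = d) : dl σ = d :=
  (hmax σ hσ.2.1).antisymm (hτd ▸ hmono.rel_of_idxOf_le (hδA τ hτ) hσ.2.1 (hσ.2.2 τ hτ))

end

namespace FirstUIP

variable {A : List (Lit V)}

def weight (A : List (Lit V)) (δ : Finset (Lit V)) : ℕ :=
  ∑ τ ∈ δ, 2 ^ A.idxOf τ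

theorem weight_lt_two_pow {s : Finset (Lit V)} {n : ℕ}
    (hs : ∀ τ ∈ s, τ ∈ A ∧ A.idxOf τ < n) : weight A s < 2 ^ n := by
  have hinj : Set.InjOn A.idxOf s := fun x hx _ _ h => (List.idxOf_inj (hs x hx).1).mp h
  rw [weight, ← Finset.sum_image hinj]
  refine Nat.geomSum_lt le_rfl ?_
  simp only [Finset.mem_image, forall_exists_index, and_imp]
  rintro _ τ hτ rfl
  exact (hs τ hτ).2

theorem weight_resolvent_lt {δ ε : Finset (Lit V)} {σ : Lit V} (hσ : σ ∈ δ)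
    (hε : Antecedent A σ ε) : weight A (δ.erase σ ∪ ε.erase σ.compl) < weight A δ :=
  calc weight A (δ.erase σ ∪ ε.erase σ.compl)
      ≤ weight A (δ.erase σ) + weight A (ε.erase σ.compl) :=
        le_self_add.trans_eq Finset.sum_union_inter
    _ < weight A (δ.erase σ) + 2 ^ A.idxOf σ := by
        refine Nat.add_lt_add_left (weight_lt_two_pow fun τ hτ => ?_) _
        exact hε.2 τ (Finset.mem_of_mem_erase hτ) (Finset.ne_of_mem_erase hτ)
    _ = weight A δ := Finset.sum_erase_add _ _ hσ

theorem exists_step {dl : Lit V → ℕ} {d : ℕ} {Ante : Lit V → Finset (Lit V) → Prop}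
    (hmono : A.Pairwise (fun a b => dl a ≤ dl b)) (hmax : ∀ l ∈ A, dl l ≤ d)
    (hante : ∀ σ ∈ A, Implied A dl σ → ∃ ε, Ante σ ε ∧ Antecedent A σ ε)
    {δ : Finset (Lit V)} (hδA : ∀ τ ∈ δ, τ ∈ A)
    (htwo : 1 < (δ.filter (fun τ => dl τ = d)).card) :
    ∃ δ', Step A dl Ante δ δ' ∧ (∀ τ ∈ δ', τ ∈ A) ∧ (∃ τ ∈ δ', dl τ = d) ∧
      weight A δ' < weight A δ := by
  obtain ⟨τ₀, hτ₀⟩ := Finset.card_pos.mp (Nat.zero_lt_of_lt htwo)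
  obtain ⟨hτ₀δ, hτ₀d⟩ := Finset.mem_filter.mp hτ₀
  obtain ⟨σ, hσ⟩ : ∃ σ, IsLast A δ σ := exists_isLast ⟨τ₀, hτ₀δ⟩ hδA
  have hσd : dl σ = d := hσ.dl_eq hmono hmax hδA hτ₀δ hτ₀d
  obtain ⟨τ, hτ, hτσ⟩ := Finset.exists_mem_ne htwo σ
  obtain ⟨hτδ, hτd⟩ := Finset.mem_filter.mp hτ
  have hτA := hδA τ hτδ
  have himplied : Implied A dl σ :=
    .inr ⟨τ, hτA, hτd.trans hσd.symm, hσ.idxOf_lt hτδ hτA hτσ⟩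
  obtain ⟨ε, hAnte, hε⟩ := hante σ hσ.2.1 himplied
  refine ⟨_, ⟨σ, ε, hσ, hδA, ⟨τ, hτδ, hτσ, hτd.trans hσd.symm⟩, hAnte, hε, rfl⟩,
    fun ρ hρ => ?_, ⟨τ, Finset.mem_union_left _ (Finset.mem_erase.2 ⟨hτσ, hτδ⟩), hτd⟩,
    weight_resolvent_lt hσ.1 hε⟩
  rcases Finset.mem_union.mp hρ with hρ | hρ
  · exact hδA ρ (Finset.mem_of_mem_erase hρ)
  · exact (hε.2 ρ (Finset.mem_of_mem_erase hρ) (Finset.ne_of_mem_erase hρ)).1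

end FirstUIP

open FirstUIP in
theorem stmt8_general (A : List (Lit V)) (dl : Lit V → ℕ) (d : ℕ)
    (hmono : A.Pairwise (fun a b => dl a ≤ dl b))
    (hmax : ∀ l ∈ A, dl l ≤ d)
    (Ante : Lit V → Finset (Lit V) → Prop)
    (hante : ∀ σ ∈ A, Implied A dl σ → ∃ ε, Ante σ ε ∧ Antecedent A σ ε)
    (δ₀ : Finset (Lit V))
    (hδ₀A : ∀ τ ∈ δ₀, τ ∈ A)
    (hδ₀d : ∃ σ ∈ δ₀, dl σ = d) :
    ∃ δ : Finset (Lit V),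
      Relation.ReflTransGen (Step A dl Ante) δ₀ δ ∧
      (δ.filter (fun τ => dl τ = d)).card = 1 := by
  induction hw : weight A δ₀ using Nat.strong_induction_on generalizing δ₀ with
  | _ n ih =>
  by_cases huip : (δ₀.filter (fun τ => dl τ = d)).card = 1
  · exact ⟨δ₀, .refl, huip⟩
  obtain ⟨σ, hσ, hσd⟩ := hδ₀d
  have htwo : 1 < (δ₀.filter (fun τ => dl τ = d)).card :=
    lt_of_le_of_ne (Finset.card_pos.mpr ⟨σ, Finset.mem_filter.mpr ⟨hσ, hσd⟩⟩) (Ne.symm huip)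
  obtain ⟨δ₁, hstep, hδ₁A, hδ₁d, hlt⟩ := exists_step hmono hmax hante hδ₀A htwo
  obtain ⟨δ, hsteps, hcard⟩ := ih _ (hw ▸ hlt) δ₁ hδ₁A hδ₁d rfl
  exact ⟨δ, .head hstep hsteps, hcard⟩

/-- First-UIP conflict analysis, started from a nogood `δ₀`
violated at decision level `d > 0` containing some literal of level `d`,
terminates with a nogood containing exactly one literal of level `d`,
provided every implied literal has an antecedent. -/
theorem stmt8 (A : List (Lit V)) (dl : Lit V → ℕ) (d : ℕ) (hd : 0 < d)
    (hnd : (A.map Lit.var).Nodup)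
    (hcons : ∀ l ∈ A, l.compl ∉ A)
    (hmono : A.Pairwise (fun a b => dl a ≤ dl b))
    (hmax : ∀ l ∈ A, dl l ≤ d)
    (Ante : Lit V → Finset (Lit V) → Prop)
    (hante : ∀ σ ∈ A, Implied A dl σ → ∃ ε, Ante σ ε ∧ Antecedent A σ ε)
    (δ₀ : Finset (Lit V))
    (hδ₀A : ∀ τ ∈ δ₀, τ ∈ A)
    (hδ₀d : ∃ σ ∈ δ₀, dl σ = d) :
    ∃ δ : Finset (Lit V),
      Relation.ReflTransGen (Step A dl Ante) δ₀ δ ∧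
      (δ.filter (fun τ => dl τ = d)).card = 1 :=
  stmt8_general A dl d hmono hmax Ante hante δ₀ hδ₀A hδ₀d
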